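/- Let T be an uncountable tree with no uncountable chains, and let X = T ∪ {p} where points of T are isolated and neighbourhoods of p are complements of finite unions of branches of T. Then Bob has a winning strategy in G_1^{ω₁}(Ω_p, Ω_p): any strategy guaranteeing that Bob plays uncountably many distinct points is winning, because an uncountable subset of T contains either an uncountable chain (impossible in T) or an infinite antichain, and an infinite antichain cannot be covered by finitely many branches. -/
import Mathlib


universe u v

open Topology Set

/-- A branch of a partial order: a maximal chain. -/
def IsBranch {T : Type u} [PartialOrder T] (c : Set T) : Prop :=
  IsChain (· ≤ ·) c ∧ ∀ c', IsChain (· ≤ ·) c' → c ⊆ c' → c = c'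

/-- The space `X = T ∪ {p}` (`p = none`): points of `T` are isolated, and a set containing
`p` is open iff its complement in `T` is covered by finitely many branches. -/
instance branchTopology (T : Type u) [PartialOrder T] : TopologicalSpace (Option T) where
  IsOpen U := none ∈ U → ∃ F : Set (Set T), F.Finite ∧ (∀ b ∈ F, IsBranch b) ∧
    {t : T | some t ∉ U} ⊆ ⋃₀ F
  isOpen_univ := by
    intro _
    exact ⟨∅, Set.finite_empty, by simp, by simp⟩
  isOpen_inter := by
    intro U V hU hV h
    obtain ⟨F₁, hF₁, hb₁, hs₁⟩ := hU h.1
    obtain ⟨F₂, hF₂, hb₂, hs₂⟩ := hV h.2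
    refine ⟨F₁ ∪ F₂, hF₁.union hF₂, ?_, ?_⟩
    · rintro b (hb | hb)
      exacts [hb₁ b hb, hb₂ b hb]
    · intro t ht
      simp only [Set.mem_setOf_eq, Set.mem_inter_iff, not_and_or] at ht
      rcases ht with ht | ht
      · exact Set.sUnion_mono Set.subset_union_left (hs₁ ht)
      · exact Set.sUnion_mono Set.subset_union_right (hs₂ ht)
  isOpen_sUnion := by
    intro S hS h
    obtain ⟨s, hs, hns⟩ := h
    obtain ⟨F, hF, hb, hsub⟩ := hS s hs hns
    refine ⟨F, hF, hb, fun t ht => hsub fun hts => ht ⟨s, hs, hts⟩⟩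

/-- A strategy for Bob in the tightness game `G_1^κ(Ω_p, Ω_p)`: at inning `ξ < κ`, given the
history of Alice's previous moves and Alice's current set `A` (with `p ∈ closure A`),
Bob picks a point of `A`. -/
structure BobStratOne (X : Type u) [TopologicalSpace X] (p : X) (κ : Ordinal.{v}) where
  move : ∀ ξ : Ordinal.{v}, ξ < κ → (∀ α : Ordinal.{v}, α < ξ → Set X) → Set X → X
  mem : ∀ ξ hξ hist A, p ∈ closure A → move ξ hξ hist A ∈ A

/-- The strategy is winning: for every play by Alice of sets having `p` in their closure,
the set of Bob's chosen points has `p` in its closure. -/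
def BobStratOne.Winning {X : Type u} [TopologicalSpace X] {p : X} {κ : Ordinal.{v}}
    (S : BobStratOne X p κ) : Prop :=
  ∀ f : ∀ ξ : Ordinal.{v}, ξ < κ → Set X, (∀ ξ hξ, p ∈ closure (f ξ hξ)) →
    p ∈ closure {x | ∃ (ξ : Ordinal.{v}) (hξ : ξ < κ),
      S.move ξ hξ (fun α hα => f α (hα.trans hξ)) (f ξ hξ) = x}

open Classical in
noncomputable def bmove {T : Type u} [PartialOrder T] (ξ : Ordinal.{v})
    (hist : ∀ α : Ordinal.{v}, α < ξ → Set (Option T)) (A : Set (Option T)) : Option T :=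
  if h : (A \ {x | ∃ (α : Ordinal.{v}) (hα : α < ξ),
      bmove α (fun β hβ => hist β (hβ.trans hα)) (hist α hα) = x}).Nonempty then
    h.choose
  else if h2 : A.Nonempty then h2.choose else none
termination_by ξ
decreasing_by all_goals exact hα

noncomputable def prevS {T : Type u} [PartialOrder T] (ξ : Ordinal.{v})
    (hist : ∀ α : Ordinal.{v}, α < ξ → Set (Option T)) : Set (Option T) :=
  {x | ∃ (α : Ordinal.{v}) (hα : α < ξ),
      bmove α (fun β hβ => hist β (hβ.trans hα)) (hist α hα) = x}

open Classical in
lemma bmove_eq {T : Type u} [PartialOrder T] (ξ : Ordinal.{v})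
    (hist : ∀ α : Ordinal.{v}, α < ξ → Set (Option T)) (A : Set (Option T)) :
    bmove ξ hist A = if h : (A \ prevS ξ hist).Nonempty then h.choose
      else if h2 : A.Nonempty then h2.choose else none := by
  rw [bmove]; rfl

lemma mem_closure_none_iff {T : Type u} [PartialOrder T] (A : Set (Option T)) :
    none ∈ closure A ↔ none ∈ A ∨ ∀ F : Set (Set T), F.Finite → (∀ b ∈ F, IsBranch b) →
      ¬ {t : T | some t ∈ A} ⊆ ⋃₀ F := by
  rw [mem_closure_iff]
  constructor
  · intro h
    by_cases hA : none ∈ A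
    · exact Or.inl hA
    refine Or.inr fun F hF hb hsub => ?_
    have hU : IsOpen {x : Option T | ∀ t : T, x = some t → t ∉ ⋃₀ F} := by
      intro _
      refine ⟨F, hF, hb, fun t ht => ?_⟩
      simp only [mem_setOf_eq, not_forall, not_not] at ht
      obtain ⟨t', ht', h2⟩ := ht
      cases ht'
      exact h2
    obtain ⟨x, hxU, hxA⟩ := h _ hU (by simp)
    match x with
    | none => exact hA hxA
    | some t => exact hxU t rfl (hsub hxA)
  · rintro (hA | h) U hU hnU
    · exact ⟨none, hnU, hA⟩
    obtain ⟨F, hF, hb, hsub⟩ := hU hnU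
    have := h F hF hb
    rw [Set.not_subset] at this
    obtain ⟨t, htA, htF⟩ := this
    refine ⟨some t, ?_, htA⟩
    by_contra hnotU
    exact htF (hsub hnotU)

/-- If `T` is an uncountable tree with no uncountable chains, then on `X = T ∪ {p}` with the
branch topology, Bob has a winning strategy in the long tightness game `G_1^{ω₁}(Ω_p, Ω_p)`. -/
theorem bob_winning_aronszajn {T : Type u} [PartialOrder T]
    (htree : ∀ t : T, IsWellOrder (Set.Iio t) (fun a b => (a : T) < b))
    (huncountable : ¬ (Set.univ : Set T).Countable)
    (hchains : ∀ C : Set T, IsChain (· ≤ ·) C → C.Countable) :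
    ∃ S : BobStratOne.{u, v} (Option T) none (Cardinal.aleph 1).ord, S.Winning := by
  set κ : Ordinal.{v} := (Cardinal.aleph 1).ord with hκ
  have hmem : ∀ (ξ : Ordinal.{v}) (hist : ∀ α : Ordinal.{v}, α < ξ → Set (Option T))
      (A : Set (Option T)), (none : Option T) ∈ closure A → bmove ξ hist A ∈ A := by
    intro ξ hist A hcl
    have hne : A.Nonempty := by
      rcases A.eq_empty_or_nonempty with rfl | h
      · simp at hcl
      · exact h
    rw [bmove_eq]
    by_cases h1 : ((A \ prevS ξ hist).Nonempty)
    · rw [dif_pos h1]; exact h1.choose_spec.1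
    · rw [dif_neg h1, dif_pos hne]; exact hne.choose_spec
  refine ⟨⟨fun ξ _ hist A => bmove ξ hist A, fun ξ hξ hist A hcl => hmem ξ hist A hcl⟩, ?_⟩
  intro f hf
  set B : Set (Option T) := {x | ∃ (ξ : Ordinal.{v}) (hξ : ξ < κ),
      bmove ξ (fun α hα => f α (hα.trans hξ)) (f ξ hξ) = x} with hB
  by_cases hcase : ∃ (ξ : Ordinal.{v}) (hξ : ξ < κ),
      ¬ (f ξ hξ \ prevS ξ (fun α hα => f α (hα.trans hξ))).Nonempty
  · obtain ⟨ξ, hξ, hne⟩ := hcase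
    have hsub : f ξ hξ ⊆ prevS ξ (fun α hα => f α (hα.trans hξ)) := by
      rw [Set.not_nonempty_iff_eq_empty, Set.diff_eq_empty] at hne
      exact hne
    have hsubB : f ξ hξ ⊆ B := by
      intro x hx
      obtain ⟨α, hα, heq⟩ := hsub hx
      exact ⟨α, hα.trans hξ, heq⟩
    exact closure_mono hsubB (hf ξ hξ)
  · push_neg at hcase
    have hbspec : ∀ (ξ : Ordinal.{v}) (hξ : ξ < κ),
        bmove ξ (fun α hα => f α (hα.trans hξ)) (f ξ hξ) ∈
          f ξ hξ \ prevS ξ (fun α hα => f α (hα.trans hξ)) := by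
      intro ξ hξ
      rw [bmove_eq]
      rw [dif_pos (hcase ξ hξ)]
      exact (hcase ξ hξ).choose_spec
    -- injectivity
    have hbinj : ∀ (α ξ : Ordinal.{v}) (hα : α < κ) (hξ : ξ < κ), α < ξ →
        bmove α (fun β hβ => f β (hβ.trans hα)) (f α hα) ≠
        bmove ξ (fun β hβ => f β (hβ.trans hξ)) (f ξ hξ) := by
      intro α ξ hα hξ hlt heq
      exact (hbspec ξ hξ).2 ⟨α, hlt, heq⟩
    have hBuncount : ¬ B.Countable := by
      intro hBc
      have : Set.Countable (Set.Iio κ) := by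
        have hmemB : ∀ ξ : Set.Iio κ, (bmove ξ.1 (fun α hα => f α (hα.trans ξ.2)) (f ξ.1 ξ.2)) ∈ B :=
          fun ξ => ⟨ξ.1, ξ.2, rfl⟩
        haveI : Countable B := hBc.to_subtype
        rw [← Set.countable_coe_iff]
        refine Function.Injective.countable
          (f := fun ξ : Set.Iio κ => (⟨_, hmemB ξ⟩ : B)) ?_
        intro ξ₁ ξ₂ h
        simp only [Subtype.mk.injEq] at h
        rcases lt_trichotomy ξ₁.1 ξ₂.1 with hlt | heq | hlt
        · exact absurd h (hbinj _ _ ξ₁.2 ξ₂.2 hlt)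
        · exact Subtype.ext heq
        · exact absurd h.symm (hbinj _ _ ξ₂.2 ξ₁.2 hlt)
      have h1 : (Cardinal.mk (Set.Iio κ)) ≤ Cardinal.aleph0 := this.le_aleph0
      rw [Ordinal.mk_Iio_ordinal, hκ, Cardinal.card_ord] at h1
      have h2 : Cardinal.aleph0 < Cardinal.lift.{v+1, v} (Cardinal.aleph 1) := by
        simpa using Cardinal.lift_lt.{v, v+1}.mpr Cardinal.aleph0_lt_aleph_one
      exact absurd h1 (not_le_of_gt h2)
    rw [mem_closure_none_iff]
    refine Or.inr fun F hF hb hsub => ?_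
    have hFc : (⋃₀ F).Countable :=
      Set.Countable.sUnion hF.countable (fun b hbF => hchains b (hb b hbF).1)
    have : B.Countable := by
      have hsubB : B ⊆ insert none (some '' ⋃₀ F) := by
        rintro x hx
        match x with
        | none => exact Set.mem_insert _ _
        | some t => exact Set.mem_insert_of_mem _ ⟨t, hsub hx, rfl⟩
      exact Set.Countable.mono hsubB ((hFc.image some).insert none)
    exact hBuncount this
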